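/- arXiv:1502.00063 — 2 statements merged into one kernel-verified Lean document; each statement's English description precedes it below -/
import Mathlib

section
/- Let (a_n)_{n=0}^∞ be a Leja sequence on the unit circle S¹. Then for every N ≥ 2 one has 0 ≤ (E_0(α_N) + N log N)/N < log(4/3). -/
open Filter Topology

/-- Logarithmic energy of the first `N` points of the sequence `a`. -/
noncomputable def logEnergy (a : ℕ → ℂ) (N : ℕ) : ℝ :=
  ∑ i ∈ Finset.range N, ∑ j ∈ Finset.range N,
    if i ≠ j then Real.log (1 / ‖a i - a j‖) else 0

/-- `a` is a Leja sequence on the unit circle: all points lie on the circle and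
`a (n+1)` maximizes `∏_{i=0}^{n} |z - a i|` over the circle. -/
def IsLejaSeq (a : ℕ → ℂ) : Prop :=
  (∀ n, ‖a n‖ = 1) ∧
  ∀ n : ℕ, ∀ z : ℂ, ‖z‖ = 1 →
    ∏ i ∈ Finset.range (n + 1), ‖z - a i‖ ≤
      ∏ i ∈ Finset.range (n + 1), ‖a (n + 1) - a i‖

/-!
Once the earlier points come in antipodal pairs, `∏_{j<2m} |z - a_j| = ∏_{i<m} |z² - a₂ᵢ²|`
depends only on `z²` and is maximal at `z = ±a₂ₘ`, while `|z - a₂ₘ| ≤ 2` with equality only at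
`z = -a₂ₘ`; so `a₂ₘ₊₁ = -a₂ₘ`, and the squares `a₂ₘ²` form again a Leja sequence. Induction
gives `∏_{i<n} |a_n - a_i| = 2^{s(n)}`, `s` the binary digit sum, hence
`E₀(α_N) = -2 log 2 · ∑_{j<N} s(j)`.
Writing `N = t + r` with `t = 2ⁿ` and `0 ≤ r < t`, the quantity `N log N - 2 log 2 ∑_{j<N} s(j)`
exceeds its value at `r` by `N·H(r/N) - 2r log 2`, `H` the binary entropy. This lies in
`[0, t log (4/3)]`: below by concavity of `H` on `[0, 1/2]`, above by Gibbs' inequality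
against the distribution `(1/4, 3/4)`.
-/

open Finset Real

def binDigitSum (n : ℕ) : ℕ := (Nat.digits 2 n).sum

lemma binDigitSum_two_mul (m : ℕ) : binDigitSum (2 * m) = binDigitSum m := by
  rcases Nat.eq_zero_or_pos m with rfl | hm
  · rfl
  · simp [binDigitSum, Nat.digits_def' one_lt_two (by omega : 0 < 2 * m)]

lemma binDigitSum_two_mul_add_one (m : ℕ) : binDigitSum (2 * m + 1) = binDigitSum m + 1 := by
  rw [binDigitSum, Nat.digits_def' one_lt_two (by omega), Nat.mul_add_mod, Nat.mul_add_div two_pos]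
  simp [binDigitSum, add_comm]

lemma binDigitSum_two_pow_add {n j : ℕ} (hj : j < 2 ^ n) :
    binDigitSum (2 ^ n + j) = binDigitSum j + 1 := by
  have hlen : (Nat.digits 2 j).length ≤ n := (Nat.digits_length_le_iff one_lt_two j).2 hj
  have := Nat.digits_append_zeroes_append_digits (k := n - (Nat.digits 2 j).length)
    (n := j) one_lt_two one_pos
  rw [Nat.add_sub_cancel' hlen, mul_one, add_comm j] at this
  rw [binDigitSum, ← this]
  simp [binDigitSum]

def cumBinDigitSum (N : ℕ) : ℕ := ∑ j ∈ range N, binDigitSum j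

lemma cumBinDigitSum_two_pow_add {n r : ℕ} (h : r ≤ 2 ^ n) :
    cumBinDigitSum (2 ^ n + r) = cumBinDigitSum (2 ^ n) + r + cumBinDigitSum r := by
  have hshift : ∑ j ∈ range r, binDigitSum (2 ^ n + j) = ∑ j ∈ range r, (binDigitSum j + 1) :=
    sum_congr rfl fun j hj => binDigitSum_two_pow_add ((mem_range.1 hj).trans_le h)
  rw [cumBinDigitSum, sum_range_add, hshift, sum_add_distrib, sum_const, card_range,
    smul_eq_mul, mul_one, cumBinDigitSum, cumBinDigitSum]
  ring

lemma two_mul_cumBinDigitSum_two_pow (n : ℕ) : 2 * cumBinDigitSum (2 ^ n) = n * 2 ^ n := by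
  induction n with
  | zero => rfl
  | succ n ih =>
    rw [pow_succ, mul_two, cumBinDigitSum_two_pow_add le_rfl]
    linear_combination 2 * ih

lemma mul_log_div_le {p q : ℝ} (hp : 0 < p) (hq : 0 < q) : p * log (q / p) ≤ q - p := by
  have := mul_le_mul_of_nonneg_left (log_le_sub_one_of_pos (div_pos hq hp)) hp.le
  rwa [mul_sub_one, mul_div_cancel₀ _ hp.ne'] at this

lemma binEntropy_le_mul_log_inv_add_mul_log_inv {p q : ℝ} (hp₀ : 0 < p) (hp₁ : p < 1) (hq₀ : 0 < q)
    (hq₁ : q < 1) : binEntropy p ≤ p * log q⁻¹ + (1 - p) * log (1 - q)⁻¹ := by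
  have h₁ := mul_log_div_le hp₀ hq₀
  have h₂ := mul_log_div_le (sub_pos.2 hp₁) (sub_pos.2 hq₁)
  rw [log_div hq₀.ne' hp₀.ne'] at h₁
  rw [log_div (sub_pos.2 hq₁).ne' (sub_pos.2 hp₁).ne'] at h₂
  simp only [binEntropy, log_inv]
  linarith

lemma two_mul_mul_log_two_le_binEntropy {p : ℝ} (hp₀ : 0 ≤ p) (hp : p ≤ 2⁻¹) :
    2 * p * log 2 ≤ binEntropy p := by
  have := strictConcave_binEntropy.concaveOn.2 (x := 0) (y := 2⁻¹) (by simp) (by norm_num)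
    (by linarith : 0 ≤ 1 - 2 * p) (by linarith : 0 ≤ 2 * p) (by ring)
  simpa [mul_inv_cancel_left₀, mul_comm] using this

noncomputable def mixingEntropy (t r : ℝ) : ℝ := (t + r) * log (t + r) - t * log t - r * log r

lemma mixingEntropy_eq_mul_binEntropy {t r : ℝ} (ht : 0 < t) (hr : 0 < r) :
    mixingEntropy t r = (t + r) * binEntropy (r / (t + r)) := by
  have hN : 0 < t + r := by positivity
  have h1 : 1 - r / (t + r) = t / (t + r) := by field_simp; ring
  rw [mixingEntropy, binEntropy, h1, inv_div, inv_div, log_div hN.ne' hr.ne',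
    log_div hN.ne' ht.ne']
  field_simp
  ring

lemma two_mul_mul_log_two_le_mixingEntropy {t r : ℝ} (hr : 0 < r) (hrt : r ≤ t) :
    2 * r * log 2 ≤ mixingEntropy t r := by
  have ht : 0 < t := hr.trans_le hrt
  have hN : 0 < t + r := by positivity
  have hp : r / (t + r) ≤ 2⁻¹ := by rw [div_le_iff₀ hN]; linarith
  calc 2 * r * log 2 = (t + r) * (2 * (r / (t + r)) * log 2) := by field_simp
    _ ≤ (t + r) * binEntropy (r / (t + r)) :=
        mul_le_mul_of_nonneg_left (two_mul_mul_log_two_le_binEntropy (by positivity) hp) hN.le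
    _ = mixingEntropy t r := (mixingEntropy_eq_mul_binEntropy ht hr).symm

lemma mixingEntropy_le {t r : ℝ} (ht : 0 < t) (hr : 0 < r) :
    mixingEntropy t r ≤ 2 * r * log 2 + t * log (4 / 3) := by
  have hN : 0 < t + r := by positivity
  have hp : r / (t + r) < 1 := by rw [div_lt_one hN]; linarith
  have hlog4 : log (4 : ℝ) = 2 * log 2 := by
    rw [show (4 : ℝ) = 2 ^ 2 by norm_num, log_pow, Nat.cast_ofNat]
  calc mixingEntropy t r = (t + r) * binEntropy (r / (t + r)) :=
        mixingEntropy_eq_mul_binEntropy ht hr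
    _ ≤ (t + r) * (r / (t + r) * log 4⁻¹⁻¹ + (1 - r / (t + r)) * log (1 - 4⁻¹)⁻¹) :=
        mul_le_mul_of_nonneg_left
          (binEntropy_le_mul_log_inv_add_mul_log_inv (by positivity) hp (by norm_num) (by norm_num)) hN.le
    _ = 2 * r * log 2 + t * log (4 / 3) := by
        rw [show (1 : ℝ) - 4⁻¹ = (4 / 3)⁻¹ by norm_num, inv_inv, inv_inv, hlog4]
        field_simp
        ring

lemma Nat.exists_eq_two_pow_add {N : ℕ} (hN : N ≠ 0) : ∃ n r, r < 2 ^ n ∧ N = 2 ^ n + r := by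
  refine ⟨Nat.log 2 N, N - 2 ^ Nat.log 2 N, ?_, (Nat.add_sub_cancel' (Nat.pow_log_le_self 2 hN)).symm⟩
  have := Nat.lt_pow_succ_log_self one_lt_two N
  rw [pow_succ] at this
  omega

/-- For a Leja sequence, `logDefect N = E₀(α_N) + N log N` (see `IsLejaSeq.logEnergy_eq`). -/
noncomputable def logDefect (N : ℕ) : ℝ := N * log N - 2 * log 2 * cumBinDigitSum N

lemma logDefect_two_pow (n : ℕ) : logDefect (2 ^ n) = 0 := by
  have hpow : 2 * (cumBinDigitSum (2 ^ n) : ℝ) = n * 2 ^ n :=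
    mod_cast two_mul_cumBinDigitSum_two_pow n
  rw [logDefect, Nat.cast_pow, Nat.cast_ofNat, log_pow]
  linear_combination (-log 2) * hpow

lemma logDefect_two_pow_add {n r : ℕ} (h : r ≤ 2 ^ n) :
    logDefect (2 ^ n + r) = logDefect r + (mixingEntropy (2 ^ n) r - 2 * r * log 2) := by
  have hsplit : (cumBinDigitSum (2 ^ n + r) : ℝ) = cumBinDigitSum (2 ^ n) + r + cumBinDigitSum r :=
    mod_cast cumBinDigitSum_two_pow_add h
  have hpow := logDefect_two_pow n
  rw [logDefect] at hpow ⊢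
  rw [logDefect, hsplit, mixingEntropy, Nat.cast_add, Nat.cast_pow, Nat.cast_ofNat]
  rw [Nat.cast_pow, Nat.cast_ofNat] at hpow
  linear_combination hpow

lemma logDefect_nonneg_and_lt (N : ℕ) :
    0 ≤ logDefect N ∧ (0 < N → logDefect N < N * log (4 / 3)) := by
  induction N using Nat.strong_induction_on with
  | _ N ih =>
  rcases Nat.eq_zero_or_pos N with rfl | hN
  · simp [logDefect, cumBinDigitSum]
  obtain ⟨n, r, hr, rfl⟩ := Nat.exists_eq_two_pow_add hN.ne'
  rcases Nat.eq_zero_or_pos r with rfl | hr₀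
  · rw [add_zero, logDefect_two_pow]
    exact ⟨le_rfl, fun _ => by positivity⟩
  have hr₀' : (0 : ℝ) < r := mod_cast hr₀
  have hrt : (r : ℝ) ≤ 2 ^ n := mod_cast hr.le
  obtain ⟨ih₀, ih₁⟩ := ih r (by omega)
  have hlow := two_mul_mul_log_two_le_mixingEntropy hr₀' hrt
  have hupp := mixingEntropy_le (by positivity : (0 : ℝ) < 2 ^ n) hr₀'
  rw [logDefect_two_pow_add hr.le, Nat.cast_add, Nat.cast_pow, Nat.cast_ofNat]
  exact ⟨by linarith, fun _ => by linarith [ih₁ hr₀]⟩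

lemma exists_norm_eq_one_sq_eq {u : ℂ} (hu : ‖u‖ = 1) : ∃ z : ℂ, ‖z‖ = 1 ∧ z ^ 2 = u := by
  obtain ⟨z, hz⟩ := IsAlgClosed.exists_pow_nat_eq u two_pos
  exact ⟨z, (pow_eq_one_iff_of_nonneg (norm_nonneg z) two_ne_zero).1 (by rw [← norm_pow, hz, hu]),
    hz⟩

lemma exists_norm_eq_one_notMem (s : Finset ℂ) : ∃ z : ℂ, ‖z‖ = 1 ∧ z ∉ s := by
  have hconn := isPreconnected_sphere (by simp [Complex.rank_real_complex]) (0 : ℂ) 1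
  have hnt : (Metric.sphere (0 : ℂ) 1).Nontrivial :=
    ⟨1, by simp, -1, by simp, by norm_num⟩
  obtain ⟨z, hz, hzs⟩ := (hconn.infinite_of_nontrivial hnt).exists_notMem_finset s
  exact ⟨z, by simpa using hz, hzs⟩

lemma eq_neg_of_two_le_norm_sub {E : Type*} [NormedAddCommGroup E] [InnerProductSpace ℝ E]
    {x y : E} (hx : ‖x‖ = 1) (hy : ‖y‖ = 1) (h : 2 ≤ ‖x - y‖) : x = -y := by
  have := parallelogram_law_with_norm ℝ x y
  rw [hx, hy] at this
  have : ‖x + y‖ = 0 := by nlinarith [norm_nonneg (x + y)]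
  exact eq_neg_of_add_eq_zero_left (norm_eq_zero.1 this)

lemma norm_neg_sub_self {E : Type*} [SeminormedAddCommGroup E] [NormedSpace ℝ E] (x : E) :
    ‖-x - x‖ = 2 * ‖x‖ := by
  rw [← neg_add', norm_neg, ← two_smul ℝ x, norm_smul, Real.norm_two]

lemma prod_norm_sub_eq_prod_norm_sq_sub {a : ℕ → ℂ} {m : ℕ}
    (hpair : ∀ i < m, a (2 * i + 1) = -a (2 * i)) (z : ℂ) :
    ∏ j ∈ range (2 * m), ‖z - a j‖ = ∏ i ∈ range m, ‖z ^ 2 - a (2 * i) ^ 2‖ := by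
  induction m with
  | zero => simp
  | succ m ih =>
    rw [mul_add_one, prod_range_succ, prod_range_succ, prod_range_succ,
      ih fun i hi => hpair i (by omega), hpair m (by omega), mul_assoc, ← norm_mul]
    congr 2
    ring

noncomputable def lejaProd (a : ℕ → ℂ) (n : ℕ) : ℝ := ∏ i ∈ range n, ‖a n - a i‖

namespace IsLejaSeq

variable {a : ℕ → ℂ}

lemma prod_le_lejaProd (ha : IsLejaSeq a) (n : ℕ) {z : ℂ} (hz : ‖z‖ = 1) :
    ∏ i ∈ range n, ‖z - a i‖ ≤ lejaProd a n := by
  cases n with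
  | zero => simp [lejaProd]
  | succ n => exact ha.2 n z hz

lemma lejaProd_pos (ha : IsLejaSeq a) (n : ℕ) : 0 < lejaProd a n := by
  obtain ⟨z, hz, hzs⟩ := exists_norm_eq_one_notMem ((range n).image a)
  refine (prod_pos fun i hi => norm_pos_iff.2 (sub_ne_zero.2 ?_)).trans_le
    (ha.prod_le_lejaProd n hz)
  rintro rfl
  exact hzs (mem_image_of_mem a hi)

lemma odd_eq_neg (ha : IsLejaSeq a) (m : ℕ) : a (2 * m + 1) = -a (2 * m) := by
  induction m using Nat.strong_induction_on with
  | _ m ih =>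
  set H : ℂ → ℝ := fun u => ∏ i ∈ range m, ‖u - a (2 * i) ^ 2‖
  have hfac (z : ℂ) : ∏ j ∈ range (2 * m), ‖z - a j‖ = H (z ^ 2) :=
    prod_norm_sub_eq_prod_norm_sq_sub ih z
  have hmax {u : ℂ} (hu : ‖u‖ = 1) : H u ≤ H (a (2 * m) ^ 2) := by
    obtain ⟨z, hz, rfl⟩ := exists_norm_eq_one_sq_eq hu
    rw [← hfac z, ← hfac (a (2 * m))]
    exact ha.prod_le_lejaProd (2 * m) hz
  have hpos : 0 < H (a (2 * m) ^ 2) := hfac (a (2 * m)) ▸ ha.lejaProd_pos (2 * m)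
  have hstep := ha.2 (2 * m) (-a (2 * m)) (by rw [norm_neg, ha.1])
  rw [prod_range_succ, prod_range_succ, hfac, hfac, neg_sq, norm_neg_sub_self, ha.1,
    mul_one] at hstep
  have hle := hmax (u := a (2 * m + 1) ^ 2) (by rw [norm_pow, ha.1, one_pow])
  have h2 : 2 ≤ ‖a (2 * m + 1) - a (2 * m)‖ :=
    le_of_mul_le_mul_left (hstep.trans (mul_le_mul_of_nonneg_right hle (norm_nonneg _))) hpos
  exact eq_neg_of_two_le_norm_sub (ha.1 _) (ha.1 _) h2

lemma prod_norm_sub_eq (ha : IsLejaSeq a) (m : ℕ) (z : ℂ) :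
    ∏ j ∈ range (2 * m), ‖z - a j‖ = ∏ i ∈ range m, ‖z ^ 2 - a (2 * i) ^ 2‖ :=
  prod_norm_sub_eq_prod_norm_sq_sub (fun i _ => ha.odd_eq_neg i) z

lemma even_sq (ha : IsLejaSeq a) : IsLejaSeq (fun m => a (2 * m) ^ 2) := by
  refine ⟨fun n => by rw [norm_pow, ha.1, one_pow], fun m u hu => ?_⟩
  obtain ⟨z, hz, rfl⟩ := exists_norm_eq_one_sq_eq hu
  have := ha.prod_le_lejaProd (2 * (m + 1)) hz
  rwa [lejaProd, ha.prod_norm_sub_eq, ha.prod_norm_sub_eq] at this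

lemma lejaProd_eq_two_pow (ha : IsLejaSeq a) (n : ℕ) : lejaProd a n = 2 ^ binDigitSum n := by
  induction n using Nat.strong_induction_on generalizing a with
  | _ n ih =>
  obtain ⟨m, rfl | rfl⟩ := Nat.even_or_odd' n
  · rcases Nat.eq_zero_or_pos m with rfl | hm
    · simp [lejaProd, binDigitSum]
    · rw [binDigitSum_two_mul, ← ih m (by omega) ha.even_sq, lejaProd, ha.prod_norm_sub_eq]
      rfl
  · rw [binDigitSum_two_mul_add_one, pow_succ, ← ih m (by omega) ha.even_sq, lejaProd,
      prod_range_succ, ha.prod_norm_sub_eq, ha.odd_eq_neg, neg_sq, norm_neg_sub_self, ha.1,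
      mul_one]
    rfl

end IsLejaSeq

lemma logEnergy_succ (a : ℕ → ℂ) (N : ℕ) :
    logEnergy a (N + 1) = logEnergy a N - 2 * ∑ i ∈ range N, log ‖a N - a i‖ := by
  have hrow : ∑ j ∈ range N, (if N ≠ j then log (1 / ‖a N - a j‖) else 0) =
      -∑ i ∈ range N, log ‖a N - a i‖ := by
    rw [← sum_neg_distrib]
    refine sum_congr rfl fun j hj => ?_
    rw [if_pos (mem_range.1 hj).ne', one_div, log_inv]
  have hcol : ∑ i ∈ range N, (if i ≠ N then log (1 / ‖a i - a N‖) else 0) =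
      -∑ i ∈ range N, log ‖a N - a i‖ := by
    rw [← hrow]
    refine sum_congr rfl fun i hi => ?_
    rw [if_pos (mem_range.1 hi).ne, if_pos (mem_range.1 hi).ne', norm_sub_rev]
  simp only [logEnergy, sum_range_succ, sum_add_distrib, hrow, hcol, ne_eq, not_true_eq_false,
    if_false]
  ring

lemma IsLejaSeq.logEnergy_eq {a : ℕ → ℂ} (ha : IsLejaSeq a) (N : ℕ) :
    logEnergy a N = -(2 * log 2 * cumBinDigitSum N) := by
  induction N with
  | zero => simp [logEnergy, cumBinDigitSum]
  | succ N ih =>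
    have hne : ∀ i ∈ range N, ‖a N - a i‖ ≠ 0 := prod_ne_zero_iff.1 (ha.lejaProd_pos N).ne'
    rw [logEnergy_succ, ← log_prod hne, ← lejaProd, ha.lejaProd_eq_two_pow, log_pow, ih,
      cumBinDigitSum, cumBinDigitSum, sum_range_succ]
    push_cast
    ring

theorem leja_logEnergy_secondOrderBounds (a : ℕ → ℂ) (ha : IsLejaSeq a)
    (N : ℕ) (hN : 2 ≤ N) :
    0 ≤ (logEnergy a N + (N : ℝ) * Real.log N) / (N : ℝ) ∧
      (logEnergy a N + (N : ℝ) * Real.log N) / (N : ℝ) < Real.log (4 / 3) := by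
  have hE : logEnergy a N + N * log N = logDefect N := by
    rw [ha.logEnergy_eq, logDefect]
    ring
  have hN₀ : (0 : ℝ) < N := mod_cast (by omega : 0 < N)
  obtain ⟨hlow, hupp⟩ := logDefect_nonneg_and_lt N
  rw [hE]
  exact ⟨div_nonneg hlow hN₀.le, (div_lt_iff₀' hN₀).2 (hupp (by omega))⟩
end

section
/- Let (a_n)_{n=0}^∞ be a Leja sequence on the unit circle S¹. Then for every integer N ≥ 1, (E_0(α_N) + N log N)/N = (E_0(α_{2N}) + 2N log(2N))/(2N). -/
open Filter Topology

/-!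
If `a` is a Leja sequence on the circle, then `a (2i+1) = -a (2i)` for every `i`, so the first `2i`
points pair off into antipodal pairs and `∏_{j<2i} (z - a j) = ∏_{j<i} (z² - a (2j)²)`. Since
`z ↦ z²` maps the circle onto itself, the squares `a (2i)²` again form a Leja sequence. Recursing
along the binary expansion gives `∏_{j<m} |a m - a j| = 2 ^ s₂(m)`, with `s₂` the binary digit sum,
so `E₀(α_N) = -2 log 2 ∑_{m<N} s₂(m)`; the doubling identity then reduces to
`∑_{m<2N} s₂(m) = 2 ∑_{m<N} s₂(m) + N`.
-/

open Finset

theorem Nat.digits_two_sum_two_mul (n : ℕ) :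
    (Nat.digits 2 (2 * n)).sum = (Nat.digits 2 n).sum := by
  rcases n.eq_zero_or_pos with rfl | hn
  · rfl
  · rw [Nat.digits_base_mul one_lt_two hn, List.sum_cons, zero_add]

theorem Nat.digits_two_sum_two_mul_add_one (n : ℕ) :
    (Nat.digits 2 (2 * n + 1)).sum = (Nat.digits 2 n).sum + 1 := by
  rw [add_comm, Nat.digits_add 2 one_lt_two 1 n one_lt_two (Or.inl one_ne_zero), List.sum_cons,
    add_comm]

theorem Nat.sum_range_two_mul_digits_two_sum (N : ℕ) :
    ∑ m ∈ range (2 * N), (Nat.digits 2 m).sum = 2 * ∑ m ∈ range N, (Nat.digits 2 m).sum + N := by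
  induction N with
  | zero => simp
  | succ N ih =>
    rw [mul_add, mul_one, sum_range_succ, sum_range_succ, ih, sum_range_succ,
      Nat.digits_two_sum_two_mul, Nat.digits_two_sum_two_mul_add_one]
    ring

theorem sum_range_sum_range_ite_ne {M : Type*} [AddCommMonoid M] (f : ℕ → ℕ → M)
    (hf : ∀ i j, f i j = f j i) (N : ℕ) :
    ∑ i ∈ range N, ∑ j ∈ range N, (if i ≠ j then f i j else 0)
      = 2 • ∑ m ∈ range N, ∑ j ∈ range m, f m j := by
  induction N with
  | zero => simp
  | succ N ih =>
    have hrow : ∀ i ∈ range N, (if i ≠ N then f i N else 0) = f N i := fun i hi => by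
      rw [if_pos (mem_range.1 hi).ne, hf]
    have hcol : ∀ j ∈ range N, (if N ≠ j then f N j else 0) = f N j := fun j hj => by
      rw [if_pos (mem_range.1 hj).ne']
    simp only [sum_range_succ (n := N), sum_add_distrib, sum_congr rfl hrow, sum_congr rfl hcol,
      ih, ne_eq, not_true_eq_false, if_false, add_zero, smul_add, two_smul]
    abel

theorem logEnergy_eq_neg_two_mul_sum (a : ℕ → ℂ) (N : ℕ) :
    logEnergy a N = -2 * ∑ m ∈ range N, ∑ j ∈ range m, Real.log ‖a m - a j‖ := by
  rw [logEnergy, sum_range_sum_range_ite_ne _ (fun i j => by rw [norm_sub_rev]), nsmul_eq_mul]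
  simp only [one_div, Real.log_inv, sum_neg_distrib]
  push_cast
  ring

theorem eq_neg_of_norm_sub_eq_add {E : Type*} [NormedAddCommGroup E] [NormedSpace ℝ E]
    [StrictConvexSpace ℝ E] {u w : E} (hn : ‖u‖ = ‖w‖) (h : ‖u - w‖ = ‖u‖ + ‖w‖) : u = -w := by
  rw [sub_eq_add_neg, ← norm_neg w] at h
  exact (sameRay_iff_norm_add.2 h).eq_of_norm_eq (by rw [norm_neg, hn])

theorem prod_range_two_mul_sub_eq {R : Type*} [CommRing R] (a : ℕ → R) {i : ℕ}
    (h : ∀ j < i, a (2 * j + 1) = -a (2 * j)) (z : R) :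
    ∏ j ∈ range (2 * i), (z - a j) = ∏ j ∈ range i, (z ^ 2 - a (2 * j) ^ 2) := by
  induction i with
  | zero => simp
  | succ i ih =>
    rw [mul_add, mul_one, prod_range_succ, prod_range_succ, prod_range_succ,
      ih fun j hj => h j (by omega), h i i.lt_succ_self, mul_assoc]
    ring

theorem prod_range_two_mul_norm_sub_eq {𝕜 : Type*} [NormedField 𝕜] (a : ℕ → 𝕜) {i : ℕ}
    (h : ∀ j < i, a (2 * j + 1) = -a (2 * j)) (z : 𝕜) :
    ∏ j ∈ range (2 * i), ‖z - a j‖ = ∏ j ∈ range i, ‖z ^ 2 - a (2 * j) ^ 2‖ := by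
  simp only [← norm_prod, prod_range_two_mul_sub_eq a h]

theorem Complex.infinite_sphere_zero_one : (Metric.sphere (0 : ℂ) 1).Infinite :=
  (isPreconnected_sphere (by simp [Complex.rank_real_complex]) 0 1).infinite_of_nontrivial
    ⟨1, by simp, -1, by simp, by norm_num⟩

namespace IsLejaSeq

variable {a : ℕ → ℂ}

theorem prod_le (ha : IsLejaSeq a) (n : ℕ) {z : ℂ} (hz : ‖z‖ = 1) :
    ∏ i ∈ range n, ‖z - a i‖ ≤ ∏ i ∈ range n, ‖a n - a i‖ := by
  cases n with
  | zero => simp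
  | succ n => exact ha.2 n z hz

theorem prod_pos (ha : IsLejaSeq a) (n : ℕ) : 0 < ∏ i ∈ range n, ‖a n - a i‖ := by
  obtain ⟨z, hz, hza⟩ := Complex.infinite_sphere_zero_one.exists_notMem_finset ((range n).image a)
  refine lt_of_lt_of_le (Finset.prod_pos fun i hi => norm_pos_iff.2 (sub_ne_zero.2 ?_))
    (ha.prod_le n (mem_sphere_zero_iff_norm.1 hz))
  rintro rfl
  exact hza (mem_image_of_mem a hi)

theorem odd_eq_neg_even (ha : IsLejaSeq a) (i : ℕ) : a (2 * i + 1) = -a (2 * i) := by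
  induction i using Nat.strong_induction_on with
  | _ i ih =>
  set F : ℂ → ℝ := fun w => ∏ j ∈ range i, ‖w - a (2 * j) ^ 2‖
  have hP (z : ℂ) : ∏ j ∈ range (2 * i), ‖z - a j‖ = F (z ^ 2) :=
    prod_range_two_mul_norm_sub_eq a ih z
  have hF_pos : 0 < F (a (2 * i) ^ 2) := hP (a (2 * i)) ▸ ha.prod_pos (2 * i)
  have hF_le : F (a (2 * i + 1) ^ 2) ≤ F (a (2 * i) ^ 2) := by
    rw [← hP, ← hP]
    exact ha.prod_le _ (ha.1 _)
  -- the antipode `-a (2i)` already attains the largest conceivable value `2 F (a (2i)²)`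
  have hmax := ha.2 (2 * i) (-a (2 * i)) (by rw [norm_neg, ha.1])
  rw [prod_range_succ, prod_range_succ, hP, hP, neg_sq, ← neg_add', norm_neg, ← two_mul,
    norm_mul, Complex.norm_two, ha.1] at hmax
  have hd_le : ‖a (2 * i + 1) - a (2 * i)‖ ≤ 2 := by
    simpa only [ha.1, one_add_one_eq_two] using norm_sub_le (a (2 * i + 1)) (a (2 * i))
  have hd : ‖a (2 * i + 1) - a (2 * i)‖ = 2 := by
    nlinarith [norm_nonneg (a (2 * i + 1) - a (2 * i))]
  exact eq_neg_of_norm_sub_eq_add (by rw [ha.1, ha.1]) (by rw [hd, ha.1, ha.1]; norm_num)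

theorem prod_range_two_mul_norm_sub (ha : IsLejaSeq a) (n : ℕ) (z : ℂ) :
    ∏ j ∈ range (2 * n), ‖z - a j‖ = ∏ j ∈ range n, ‖z ^ 2 - a (2 * j) ^ 2‖ :=
  prod_range_two_mul_norm_sub_eq a (fun j _ => ha.odd_eq_neg_even j) z

theorem sq_two_mul (ha : IsLejaSeq a) : IsLejaSeq fun i => a (2 * i) ^ 2 := by
  refine ⟨fun n => by rw [norm_pow, ha.1, one_pow], fun n w hw => ?_⟩
  obtain ⟨z, rfl⟩ := IsAlgClosed.exists_pow_nat_eq w two_pos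
  have hz : ‖z‖ = 1 := by
    rwa [norm_pow, pow_eq_one_iff_of_nonneg (norm_nonneg z) two_ne_zero] at hw
  rw [← ha.prod_range_two_mul_norm_sub, ← ha.prod_range_two_mul_norm_sub]
  exact ha.prod_le _ hz

theorem prod_norm_sub_eq_two_pow (ha : IsLejaSeq a) (m : ℕ) :
    ∏ j ∈ range m, ‖a m - a j‖ = 2 ^ (Nat.digits 2 m).sum := by
  induction m using Nat.strong_induction_on generalizing a with
  | _ m ih =>
  obtain ⟨i, rfl | rfl⟩ := Nat.even_or_odd' m
  · rcases i.eq_zero_or_pos with rfl | hi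
    · simp
    rw [ha.prod_range_two_mul_norm_sub, ih i (by omega) ha.sq_two_mul, Nat.digits_two_sum_two_mul]
  · rw [prod_range_succ, ha.prod_range_two_mul_norm_sub, ha.odd_eq_neg_even, neg_sq,
      ih i (by omega) ha.sq_two_mul, Nat.digits_two_sum_two_mul_add_one, pow_succ, ← neg_add',
      norm_neg, ← two_mul, norm_mul, Complex.norm_two, ha.1, mul_one]

theorem logEnergy_eq_digits_sum (ha : IsLejaSeq a) (N : ℕ) :
    logEnergy a N = -2 * Real.log 2 * ∑ m ∈ range N, ((Nat.digits 2 m).sum : ℝ) := by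
  have hlog (m : ℕ) : ∑ j ∈ range m, Real.log ‖a m - a j‖ = (Nat.digits 2 m).sum * Real.log 2 := by
    rw [← Real.log_prod fun j hj h0 => (ha.prod_pos m).ne' (prod_eq_zero hj h0),
      ha.prod_norm_sub_eq_two_pow, Real.log_pow]
  simp only [logEnergy_eq_neg_two_mul_sum, hlog, ← sum_mul]
  ring

end IsLejaSeq

theorem leja_logEnergy_doubling (a : ℕ → ℂ) (ha : IsLejaSeq a) (N : ℕ) (hN : 1 ≤ N) :
    (logEnergy a N + (N : ℝ) * Real.log N) / (N : ℝ)
      = (logEnergy a (2 * N) + ((2 * N : ℕ) : ℝ) * Real.log ((2 * N : ℕ) : ℝ))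
          / ((2 * N : ℕ) : ℝ) := by
  have hN0 : (N : ℝ) ≠ 0 := Nat.cast_ne_zero.2 (by omega)
  have hsum : ∑ m ∈ range (2 * N), ((Nat.digits 2 m).sum : ℝ)
      = 2 * ∑ m ∈ range N, ((Nat.digits 2 m).sum : ℝ) + N := by
    simp only [← Nat.cast_sum, Nat.sum_range_two_mul_digits_two_sum N, Nat.cast_add, Nat.cast_mul,
      Nat.cast_ofNat]
  rw [ha.logEnergy_eq_digits_sum, ha.logEnergy_eq_digits_sum, hsum, Nat.cast_mul, Nat.cast_two,
    Real.log_mul two_ne_zero hN0]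
  field_simp
  ring
end
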